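/- arXiv:1708.04425 — 7 statements merged into one kernel-verified Lean document; each statement's English description precedes it below -/
import Mathlib

section
/- Let N ≥ 1 be an integer and let t be a nonzero real number. Then the function ℝ → ℝ defined by z ↦ ((z + t)^(2^N) − z^(2^N)) / t is strictly increasing. -/
/-! The derivative of `z ↦ ((z + t)^n - z^n) / t` is `n` times the difference quotient of the
odd power `z ↦ z^(n-1)`, which is positive because odd powers are strictly increasing. -/

theorem Odd.pow_add_sub_pow_div_pos {K : Type*} [Field K] [LinearOrder K] [IsStrictOrderedRing K]
    {m : ℕ} (hm : Odd m) (z : K) {t : K} (ht : t ≠ 0) : 0 < ((z + t) ^ m - z ^ m) / t := by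
  rcases ht.lt_or_gt with ht | ht
  · exact div_pos_of_neg_of_neg (sub_neg.2 (hm.strictMono_pow (by linarith))) ht
  · exact div_pos (sub_pos.2 (hm.strictMono_pow (by linarith))) ht

theorem hasDerivAt_pow_add_sub_pow_div (n : ℕ) (t z : ℝ) :
    HasDerivAt (fun z : ℝ => ((z + t) ^ n - z ^ n) / t)
      (n * (((z + t) ^ (n - 1) - z ^ (n - 1)) / t)) z := by
  have hshift : HasDerivAt (fun z : ℝ => (z + t) ^ n) (n * (z + t) ^ (n - 1)) z := by
    simpa using ((hasDerivAt_id z).add_const t).fun_pow n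
  exact ((hshift.fun_sub (hasDerivAt_pow n z)).div_const t).congr_deriv (by ring)

theorem Even.strictMono_pow_add_sub_pow_div {n : ℕ} (hn : Even n) (hn₀ : n ≠ 0) {t : ℝ}
    (ht : t ≠ 0) : StrictMono fun z : ℝ => ((z + t) ^ n - z ^ n) / t := by
  have hodd : Odd (n - 1) := Nat.Even.sub_odd (Nat.one_le_iff_ne_zero.2 hn₀) hn odd_one
  refine strictMono_of_deriv_pos fun z => ?_
  rw [(hasDerivAt_pow_add_sub_pow_div n t z).deriv]
  exact mul_pos (by positivity) (hodd.pow_add_sub_pow_div_pos z ht)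

/-- For `N ≥ 1` and `t ≠ 0`, the function `z ↦ ((z + t)^(2^N) − z^(2^N)) / t`
is strictly increasing on `ℝ`. -/
theorem strictMono_diff_quotient (N : ℕ) (hN : 1 ≤ N) (t : ℝ) (ht : t ≠ 0) :
    StrictMono (fun z : ℝ => ((z + t) ^ (2 ^ N) - z ^ (2 ^ N)) / t) :=
  (Nat.even_pow.2 ⟨even_two, by omega⟩).strictMono_pow_add_sub_pow_div (by positivity) ht
end

section
/- Let N ≥ 1 be an integer. Then the map Φ : ℝ² → ℝ² defined by Φ(z₁, z₂) = (z₁ − z₂, ∏_{j=0}^{N−1} (z₁^(2^j) + z₂^(2^j))) is a bijection. -/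
/-!
Writing `t = z₁ - z₂`, the map sends `(t + z, z)` to `(t, f_t z)` with
`f_t z = ∏ j < N, ((t + z) ^ 2 ^ j + z ^ 2 ^ j)`, so it suffices that every `f_t` is a bijection
of `ℝ`. By telescoping, `t * f_t z = (t + z) ^ M - z ^ M` with `M = 2 ^ N`, and `f_0 z = M * z ^ (M - 1)`.
Since `M - 1` is odd, `f_t` is strictly increasing: for `t ≠ 0` its derivative is `M` times a
difference quotient of `z ↦ z ^ (M - 1)`. Finally `f_t` is continuous and tends to `±∞` at `±∞`,
because its factor `j = 0` is `t + 2 z` and all the others are even powers.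
-/

open Filter Finset Function

def prodTwoPowAdd {R : Type*} [CommSemiring R] (N : ℕ) (a b : R) : R :=
  ∏ j ∈ range N, (a ^ 2 ^ j + b ^ 2 ^ j)

theorem prodTwoPowAdd_succ {R : Type*} [CommSemiring R] (N : ℕ) (a b : R) :
    prodTwoPowAdd (N + 1) a b = prodTwoPowAdd N a b * (a ^ 2 ^ N + b ^ 2 ^ N) :=
  prod_range_succ _ _

theorem prodTwoPowAdd_self {R : Type*} [CommSemiring R] (N : ℕ) (a : R) :
    prodTwoPowAdd N a a = 2 ^ N * a ^ (2 ^ N - 1) := by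
  induction N with
  | zero => simp [prodTwoPowAdd]
  | succ N ih =>
    have hexp : 2 ^ (N + 1) - 1 = (2 ^ N - 1) + 2 ^ N := by
      have := Nat.one_le_two_pow (n := N)
      omega
    rw [prodTwoPowAdd_succ, ih, hexp, pow_add, pow_succ]
    ring

theorem prodTwoPowAdd_mul_sub {R : Type*} [CommRing R] (N : ℕ) (a b : R) :
    prodTwoPowAdd N a b * (a - b) = a ^ 2 ^ N - b ^ 2 ^ N :=
  (pow_two_pow_sub_pow_two_pow N).symm

section Limits

variable {R : Type*} [CommRing R] [LinearOrder R] [IsStrictOrderedRing R]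

theorem tendsto_const_add_pow_add_pow_atTop {n : ℕ} (hn : n ≠ 0) (t : R) :
    Tendsto (fun z : R => (t + z) ^ n + z ^ n) atTop atTop :=
  ((tendsto_pow_atTop hn).comp (tendsto_atTop_add_const_left _ t tendsto_id)).atTop_add_atTop
    (tendsto_pow_atTop hn)

theorem tendsto_const_add_pow_add_pow_atBot {n : ℕ} (hn : Even n) (hn₀ : n ≠ 0) (t : R) :
    Tendsto (fun z : R => (t + z) ^ n + z ^ n) atBot atTop := by
  refine ((tendsto_const_add_pow_add_pow_atTop hn₀ (-t)).comp tendsto_neg_atBot_atTop).congr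
    fun z => ?_
  simp only [comp_apply, ← neg_add, hn.neg_pow]

theorem tendsto_prodTwoPowAdd_const_add_atTop {N : ℕ} (hN : N ≠ 0) (t : R) :
    Tendsto (fun z => prodTwoPowAdd N (t + z) z) atTop atTop := by
  induction N with
  | zero => exact (hN rfl).elim
  | succ N ih =>
    simp only [prodTwoPowAdd_succ]
    rcases eq_or_ne N 0 with rfl | hN
    · simpa [prodTwoPowAdd] using tendsto_const_add_pow_add_pow_atTop one_ne_zero t
    · exact (ih hN).atTop_mul_atTop₀ (tendsto_const_add_pow_add_pow_atTop (by positivity) t)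

theorem tendsto_prodTwoPowAdd_const_add_atBot {N : ℕ} (hN : N ≠ 0) (t : R) :
    Tendsto (fun z => prodTwoPowAdd N (t + z) z) atBot atBot := by
  induction N with
  | zero => exact (hN rfl).elim
  | succ N ih =>
    simp only [prodTwoPowAdd_succ]
    rcases eq_or_ne N 0 with rfl | hN
    · simpa [prodTwoPowAdd] using
        (tendsto_atBot_add_const_left _ t tendsto_id).atBot_add_atBot tendsto_id
    · exact (ih hN).atBot_mul_atTop₀
        (tendsto_const_add_pow_add_pow_atBot (Nat.even_pow.2 ⟨even_two, hN⟩) (by positivity) t)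

end Limits

theorem strictMono_prodTwoPowAdd_const_add {N : ℕ} (hN : N ≠ 0) (t : ℝ) :
    StrictMono fun z => prodTwoPowAdd N (t + z) z := by
  have hodd : Odd (2 ^ N - 1) :=
    Nat.Even.sub_odd Nat.one_le_two_pow (Nat.even_pow.2 ⟨even_two, hN⟩) odd_one
  rcases eq_or_ne t 0 with rfl | ht
  · simp only [zero_add, prodTwoPowAdd_self]
    exact hodd.strictMono_pow.const_mul (by positivity)
  have hquot : (fun z => prodTwoPowAdd N (t + z) z) =
      fun z => ((t + z) ^ 2 ^ N - z ^ 2 ^ N) / t := by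
    ext z
    rw [eq_div_iff ht, ← prodTwoPowAdd_mul_sub, add_sub_cancel_right]
  rw [hquot]
  refine strictMono_of_hasDerivAt_pos (fun z => ((((hasDerivAt_id z).const_add t).pow _).sub
    (hasDerivAt_pow _ z)).div_const t) fun z => ?_
  have hslope := (hodd.strictMono_pow.strictMonoOn Set.univ).slope_pos (Set.mem_univ z)
    (Set.mem_univ (t + z)) (by simpa using ht)
  rw [slope_def_field, add_sub_cancel_right] at hslope
  simp only [id, mul_one, ← mul_sub, mul_div_assoc]
  exact mul_pos (by positivity) hslope

theorem bijective_prodTwoPowAdd_const_add {N : ℕ} (hN : N ≠ 0) (t : ℝ) :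
    Bijective fun z => prodTwoPowAdd N (t + z) z :=
  ⟨(strictMono_prodTwoPowAdd_const_add hN t).injective,
    Continuous.surjective (by unfold prodTwoPowAdd; fun_prop)
      (tendsto_prodTwoPowAdd_const_add_atTop hN t) (tendsto_prodTwoPowAdd_const_add_atBot hN t)⟩

theorem bijective_sub_prod_of_bijective {G β : Type*} [AddGroup G] {F : G → G → β}
    (hF : ∀ t, Bijective fun z => F (t + z) z) :
    Bijective fun p : G × G => (p.1 - p.2, F p.1 p.2) := by
  refine ⟨fun ⟨a, b⟩ ⟨c, d⟩ h => ?_, fun ⟨t, y⟩ => ?_⟩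
  · obtain ⟨hsub, hF'⟩ := Prod.ext_iff.1 h
    dsimp only at hsub hF'
    rw [← sub_add_cancel a b, ← sub_add_cancel c d, hsub] at hF'
    obtain rfl : b = d := (hF (c - d)).1 hF'
    rw [sub_left_inj.1 hsub]
  · obtain ⟨z, rfl⟩ := (hF t).2 y
    exact ⟨(t + z, z), by simp⟩

/-- For `N ≥ 1`, the map `Φ(z₁, z₂) = (z₁ − z₂, ∏_{j=0}^{N−1} (z₁^(2^j) + z₂^(2^j)))`
is a bijection of `ℝ²`. -/
theorem bijective_diff_prod_map (N : ℕ) (hN : 1 ≤ N) :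
    Function.Bijective (fun p : ℝ × ℝ =>
      (p.1 - p.2, ∏ j ∈ Finset.range N, (p.1 ^ (2 ^ j) + p.2 ^ (2 ^ j)))) :=
  bijective_sub_prod_of_bijective (F := prodTwoPowAdd N)
    (bijective_prodTwoPowAdd_const_add (Nat.one_le_iff_ne_zero.1 hN))
end

section
/- Let k ≥ 2 be an even integer and write k = 2^N · l with N ≥ 1 and l odd. Then the map ℝ² → ℝ² defined by (x₁, x₂) ↦ (x₁^l − x₂^l, ∏_{j=0}^{N−1} (x₁^(l·2^j) + x₂^(l·2^j))) is a bijection, and for all (x₁, x₂) ∈ ℝ² the product of its two coordinates equals x₁^k − x₂^k. -/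
/-!
Since `x ↦ x ^ l` is a bijection of `ℝ` for odd `l`, it suffices to treat `l = 1`, i.e. the map
`(z₁, z₂) ↦ (z₁ - z₂, g_{z₁ - z₂}(z₂))` with `g_a(t) = ∏_{j<N} ((t + a)^(2^j) + t^(2^j))`, which is
bijective as soon as every `g_a` is. Each `g_a` is strictly increasing: `g_0(t) = 2^N t^(2^N - 1)`,
and for `a ≠ 0` we have `a² g_a(t) = a ((t + a)^(2^N) - t^(2^N))`, whose derivative is positive
because `t ↦ t^(2^N - 1)` is increasing. It tends to `+∞` and satisfies `g_a(-a - t) = -g_a(t)`,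
so it is onto by the intermediate value theorem. The product formula is the telescoping identity
`(z₁ - z₂) ∏_{j<N} (z₁^(2^j) + z₂^(2^j)) = z₁^(2^N) - z₂^(2^N)`.
-/

open Finset Filter Function

theorem Continuous.surjective_of_tendsto_atTop_of_map_sub_eq_neg {f : ℝ → ℝ} (hf : Continuous f)
    (htop : Tendsto f atTop atTop) (c : ℝ) (hsymm : ∀ x, f (c - x) = -f x) : Surjective f := by
  refine hf.surjective htop ?_
  have hbot : Tendsto (fun x => -f (c - x)) atBot atBot :=
    tendsto_neg_atTop_atBot.comp <| htop.comp <|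
      tendsto_atTop_add_const_left _ c tendsto_neg_atBot_atTop
  simpa [hsymm] using hbot

theorem Odd.bijective_pow {l : ℕ} (hl : Odd l) : Bijective fun x : ℝ => x ^ l :=
  ⟨hl.strictMono_pow.injective,
    (continuous_pow l).surjective_of_tendsto_atTop_of_map_sub_eq_neg
      (tendsto_pow_atTop hl.pos.ne') 0 fun x => by rw [zero_sub, hl.neg_pow]⟩

theorem strictMono_mul_add_pow_sub_pow {M : ℕ} (hM : Even M) (hM0 : M ≠ 0) {a : ℝ} (ha : a ≠ 0) :
    StrictMono fun t : ℝ => a * ((t + a) ^ M - t ^ M) := by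
  have hodd : Odd (M - 1) := Nat.Even.sub_odd (Nat.one_le_iff_ne_zero.mpr hM0) hM odd_one
  refine strictMono_of_deriv_pos fun t => ?_
  have hderiv : HasDerivAt (fun t : ℝ => a * ((t + a) ^ M - t ^ M))
      (a * (M * (t + a) ^ (M - 1) * 1 - M * t ^ (M - 1))) t :=
    ((((hasDerivAt_id t).add_const a).pow M).sub (hasDerivAt_pow M t)).const_mul a
  have hsign : 0 < a * ((t + a) ^ (M - 1) - t ^ (M - 1)) := by
    rcases ha.lt_or_gt with hneg | hpos
    · exact mul_pos_of_neg_of_neg hneg (sub_neg.mpr (hodd.strictMono_pow (by linarith)))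
    · exact mul_pos hpos (sub_pos.mpr (hodd.strictMono_pow (by linarith)))
  have hM : (0 : ℝ) < M := by exact_mod_cast Nat.pos_of_ne_zero hM0
  rw [hderiv.deriv]
  nlinarith

theorem strictMono_prod_add_pow_two_pow {N : ℕ} (hN : N ≠ 0) (a : ℝ) :
    StrictMono fun t : ℝ => ∏ j ∈ range N, ((t + a) ^ 2 ^ j + t ^ 2 ^ j) := by
  have hM : Even (2 ^ N) := (Nat.even_pow' hN).mpr even_two
  rcases eq_or_ne a 0 with rfl | ha
  · have hzero : ∀ t : ℝ, ∏ j ∈ range N, ((t + 0) ^ 2 ^ j + t ^ 2 ^ j) = 2 ^ N * t ^ (2 ^ N - 1) :=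
      fun t => by
        simp only [add_zero, ← two_mul, prod_mul_distrib, prod_const, card_range,
          prod_pow_eq_pow_sum, Nat.geomSum_eq le_rfl, Nat.add_one_sub_one, Nat.div_one]
    simp only [hzero]
    exact (Nat.Even.sub_odd Nat.one_le_two_pow hM odd_one).strictMono_pow.const_mul (by positivity)
  · intro s t hst
    have key : ∀ u : ℝ, a * ((u + a) ^ 2 ^ N - u ^ 2 ^ N)
        = a ^ 2 * ∏ j ∈ range N, ((u + a) ^ 2 ^ j + u ^ 2 ^ j) := fun u => by
      rw [pow_two_pow_sub_pow_two_pow, add_sub_cancel_left]; ring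
    have := strictMono_mul_add_pow_sub_pow hM (by positivity) ha hst
    simp only [key] at this
    exact lt_of_mul_lt_mul_left this (sq_nonneg a)

-- Only the factor `j = 0` has an odd exponent.
theorem prod_add_pow_two_pow_neg_sub {N : ℕ} (hN : N ≠ 0) (a t : ℝ) :
    ∏ j ∈ range N, ((-a - t + a) ^ 2 ^ j + (-a - t) ^ 2 ^ j)
      = -∏ j ∈ range N, ((t + a) ^ 2 ^ j + t ^ 2 ^ j) := by
  obtain ⟨n, rfl⟩ := Nat.exists_eq_succ_of_ne_zero hN
  rw [prod_range_succ', prod_range_succ']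
  have hfactor : ∀ j ∈ range n, (-a - t + a) ^ 2 ^ (j + 1) + (-a - t) ^ 2 ^ (j + 1)
      = (t + a) ^ 2 ^ (j + 1) + t ^ 2 ^ (j + 1) := fun j _ => by
    have heven : Even (2 ^ (j + 1)) := (Nat.even_pow' j.succ_ne_zero).mpr even_two
    rw [show -a - t + a = -t by ring, show -a - t = -(t + a) by ring, heven.neg_pow, heven.neg_pow,
      add_comm]
  rw [prod_congr rfl hfactor]
  ring

theorem tendsto_prod_add_pow_two_pow_atTop {N : ℕ} (hN : N ≠ 0) (a : ℝ) :
    Tendsto (fun t : ℝ => ∏ j ∈ range N, ((t + a) ^ 2 ^ j + t ^ 2 ^ j)) atTop atTop := by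
  obtain ⟨n, rfl⟩ := Nat.exists_eq_succ_of_ne_zero hN
  refine tendsto_atTop_mono' _ ?_ tendsto_id
  filter_upwards [eventually_ge_atTop (max 1 (-a))] with t ht
  have ht1 : 1 ≤ t := le_of_max_le_left ht
  have hta : -a ≤ t := le_of_max_le_right ht
  -- every factor but the first is `≥ t ^ 2 ^ (j + 1) ≥ 1`, as even powers are nonnegative
  have hrest : 1 ≤ ∏ j ∈ range n, ((t + a) ^ 2 ^ (j + 1) + t ^ 2 ^ (j + 1)) :=
    one_le_prod fun j _ => by
      have heven : Even (2 ^ (j + 1)) := (Nat.even_pow' j.succ_ne_zero).mpr even_two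
      nlinarith [heven.pow_nonneg (t + a), one_le_pow₀ (n := 2 ^ (j + 1)) ht1]
  rw [prod_range_succ']
  simp only [pow_zero, pow_one, id_eq]
  nlinarith

theorem bijective_prod_add_pow_two_pow {N : ℕ} (hN : N ≠ 0) (a : ℝ) :
    Bijective fun t : ℝ => ∏ j ∈ range N, ((t + a) ^ 2 ^ j + t ^ 2 ^ j) :=
  ⟨(strictMono_prod_add_pow_two_pow hN a).injective,
    (by fun_prop : Continuous _).surjective_of_tendsto_atTop_of_map_sub_eq_neg
      (tendsto_prod_add_pow_two_pow_atTop hN a) (-a) (prod_add_pow_two_pow_neg_sub hN a)⟩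

theorem bijective_sub_prod_add_pow_two_pow {N : ℕ} (hN : N ≠ 0) :
    Bijective fun z : ℝ × ℝ => (z.1 - z.2, ∏ j ∈ range N, (z.1 ^ 2 ^ j + z.2 ^ 2 ^ j)) := by
  constructor
  · rintro ⟨x₁, x₂⟩ ⟨y₁, y₂⟩ h
    obtain ⟨hsub, hprod⟩ := Prod.mk.inj h
    have hx : x₁ = x₂ + (x₁ - x₂) := by ring
    have hy : y₁ = y₂ + (x₁ - x₂) := by rw [hsub]; ring
    rw [hx, hy] at hprod
    have h₂ : x₂ = y₂ := (bijective_prod_add_pow_two_pow hN (x₁ - x₂)).injective hprod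
    rw [Prod.mk.injEq, h₂]
    exact ⟨by linarith, rfl⟩
  · rintro ⟨a, b⟩
    obtain ⟨t, ht⟩ := (bijective_prod_add_pow_two_pow hN a).surjective b
    exact ⟨(t + a, t), by simp [ht]⟩

theorem bijective_factorization_even_pow_general (k N l : ℕ)
    (hN : 1 ≤ N) (hl : Odd l) (hkl : k = 2 ^ N * l) :
    Function.Bijective (fun p : ℝ × ℝ =>
      (p.1 ^ l - p.2 ^ l,
        ∏ j ∈ Finset.range N, (p.1 ^ (l * 2 ^ j) + p.2 ^ (l * 2 ^ j)))) ∧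
    ∀ p : ℝ × ℝ,
      (p.1 ^ l - p.2 ^ l) *
          ∏ j ∈ Finset.range N, (p.1 ^ (l * 2 ^ j) + p.2 ^ (l * 2 ^ j)) =
        p.1 ^ k - p.2 ^ k := by
  simp only [pow_mul]
  refine ⟨(bijective_sub_prod_add_pow_two_pow (Nat.one_le_iff_ne_zero.mp hN)).comp
    (hl.bijective_pow.prodMap hl.bijective_pow), fun p => ?_⟩
  rw [mul_comm, ← pow_two_pow_sub_pow_two_pow, hkl, mul_comm, pow_mul, pow_mul]

/-- For an even `k = 2^N · l ≥ 2` with `N ≥ 1` and `l` odd, the map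
`(x₁, x₂) ↦ (x₁^l − x₂^l, ∏_{j=0}^{N−1} (x₁^(l·2^j) + x₂^(l·2^j)))` is a bijection
of `ℝ²`, and the product of its two coordinates equals `x₁^k − x₂^k`. -/
theorem bijective_factorization_even_pow (k N l : ℕ) (hk : 2 ≤ k) (hke : Even k)
    (hN : 1 ≤ N) (hl : Odd l) (hkl : k = 2 ^ N * l) :
    Function.Bijective (fun p : ℝ × ℝ =>
      (p.1 ^ l - p.2 ^ l,
        ∏ j ∈ Finset.range N, (p.1 ^ (l * 2 ^ j) + p.2 ^ (l * 2 ^ j)))) ∧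
    ∀ p : ℝ × ℝ,
      (p.1 ^ l - p.2 ^ l) *
          ∏ j ∈ Finset.range N, (p.1 ^ (l * 2 ^ j) + p.2 ^ (l * 2 ^ j)) =
        p.1 ^ k - p.2 ^ k :=
  bijective_factorization_even_pow_general k N l hN hl hkl
end

section
/- Let N > k ≥ 1 be integers, let r ≥ 1, and let γ = (γ₁, …, γ_r) : ℝ → ℝ^r be a map each of whose coordinates γ_i is real analytic on ℝ. Then the function ℝ → ℝ defined by t ↦ (∑_{i=1}^r γ_i(t)^(2^N))^(1/2^k) (the real 2^k-th root of the nonnegative number ∑ γ_i(t)^(2^N)) is real analytic on ℝ. -/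
/-!
Near a point `t₀` where the `γ i` do not all vanish identically, factor out the lowest order of
vanishing: `γ i t = (t - t₀) ^ m * g i t` with some `g i t₀ ≠ 0`. Then
`∑ γ_i ^ 2^N = (t - t₀) ^ (m 2^N) * u` with `u` analytic and `u t₀ > 0`, and since
`m 2^N = (m 2^(N-k)) 2^k` with `m 2^(N-k)` even, the `2^k`-th root is
`(t - t₀) ^ (m 2^(N-k)) * u ^ (1/2^k)`.
-/

open Filter Topology
open scoped ContDiff

theorem exists_eventually_eq_pow_smul_of_analyticAt {𝕜 E ι : Type*} [NontriviallyNormedField 𝕜]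
    [NormedAddCommGroup E] [NormedSpace 𝕜 E] [Finite ι] {f : ι → 𝕜 → E} {z₀ : 𝕜}
    (hf : ∀ i, AnalyticAt 𝕜 (f i) z₀) (hfin : ∃ i, analyticOrderAt (f i) z₀ ≠ ⊤) :
    ∃ (m : ℕ) (g : ι → 𝕜 → E), (∀ i, AnalyticAt 𝕜 (g i) z₀) ∧
      (∀ᶠ z in 𝓝 z₀, ∀ i, f i z = (z - z₀) ^ m • g i z) ∧ ∃ i, g i z₀ ≠ 0 := by
  obtain ⟨i₀, hi₀⟩ := hfin
  have : Nonempty ι := ⟨i₀⟩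
  obtain ⟨j, hj⟩ := Finite.exists_min fun i => analyticOrderAt (f i) z₀
  set m := analyticOrderNatAt (f j) z₀
  have hm : analyticOrderAt (f j) z₀ = m :=
    (Nat.cast_analyticOrderNatAt (ne_top_of_le_ne_top hi₀ (hj i₀))).symm
  choose g hg hfg using fun i => (natCast_le_analyticOrderAt (hf i)).mp (hm ▸ hj i)
  refine ⟨m, g, hg, eventually_all.mpr hfg, j, ?_⟩
  have hsplit : analyticOrderAt (f j) z₀ = m + analyticOrderAt (g j) z₀ := by
    rw [analyticOrderAt_congr (hfg j), ← analyticOrderAt_centeredMonomial (z₀ := z₀) (n := m),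
      ← analyticOrderAt_smul (by fun_prop) (hg j)]
    rfl
  exact (hg j).analyticOrderAt_eq_zero.mp (by simpa [hm] using hsplit.symm)

theorem AnalyticAt.rpow_const_of_ne {f : ℝ → ℝ} {x c : ℝ} (hf : AnalyticAt ℝ f x)
    (hx : f x ≠ 0) : AnalyticAt ℝ (fun t => f t ^ c) x :=
  (Real.contDiffAt_rpow_const_of_ne (n := ω) hx).analyticAt.comp hf

theorem analyticAt_rpow_one_div_of_eventuallyEq_pow_mul {f u : ℝ → ℝ} {t₀ : ℝ} {e p : ℕ}
    (he : Even e) (hp : p ≠ 0) (hu : AnalyticAt ℝ u t₀) (hu₀ : 0 < u t₀)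
    (hf : f =ᶠ[𝓝 t₀] fun t => (t - t₀) ^ (e * p) * u t) :
    AnalyticAt ℝ (fun t => f t ^ ((1 : ℝ) / p)) t₀ := by
  have hroot : AnalyticAt ℝ (fun t => (t - t₀) ^ e * u t ^ ((1 : ℝ) / p)) t₀ :=
    ((analyticAt_id.sub analyticAt_const).pow e).mul (hu.rpow_const_of_ne hu₀.ne')
  refine hroot.congr ?_
  filter_upwards [hf, hu.continuousAt.eventually (lt_mem_nhds hu₀)] with t hft hut
  rw [hft, pow_mul, Real.mul_rpow (pow_nonneg (he.pow_nonneg _) _) hut.le, one_div,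
    Real.pow_rpow_inv_natCast (he.pow_nonneg _) hp]

theorem analyticOn_root_sum_pow_comp_arc_general (N k r : ℕ) (hkN : k < N)
    (γ : ℝ → Fin r → ℝ)
    (hγ : ∀ i, AnalyticOn ℝ (fun t => γ t i) Set.univ) :
    AnalyticOn ℝ (fun t => (∑ i, γ t i ^ (2 ^ N)) ^ ((1 : ℝ) / 2 ^ k)) Set.univ := by
  refine analyticOn_univ.mpr fun t₀ _ => ?_
  have hγ₀ : ∀ i, AnalyticAt ℝ (fun t => γ t i) t₀ := fun i => analyticOn_univ.mp (hγ i) t₀ trivial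
  by_cases hfin : ∃ i, analyticOrderAt (fun t => γ t i) t₀ ≠ ⊤
  · obtain ⟨m, g, hg, hγg, j, hj⟩ := exists_eventually_eq_pow_smul_of_analyticAt hγ₀ hfin
    have hsum : (fun t => ∑ i, γ t i ^ 2 ^ N) =ᶠ[𝓝 t₀]
        fun t => (t - t₀) ^ (m * 2 ^ (N - k) * 2 ^ k) * ∑ i, g i t ^ 2 ^ N := by
      filter_upwards [hγg] with t ht
      rw [mul_assoc, ← pow_add, Nat.sub_add_cancel hkN.le, Finset.mul_sum]
      simp only [ht, smul_eq_mul, mul_pow, pow_mul]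
    have heven : Even (2 ^ N) := (Nat.even_pow' (by omega)).mpr even_two
    have hpos : 0 < ∑ i, g i t₀ ^ 2 ^ N :=
      Finset.sum_pos' (fun i _ => heven.pow_nonneg _) ⟨j, Finset.mem_univ _, heven.pow_pos hj⟩
    simpa using analyticAt_rpow_one_div_of_eventuallyEq_pow_mul (p := 2 ^ k)
      (((Nat.even_pow' (by omega)).mpr even_two).mul_left m) (by positivity)
      (Finset.analyticAt_fun_sum _ fun i _ => (hg i).pow _) hpos hsum
  · push Not at hfin
    refine (analyticAt_const (v := (0 : ℝ))).congr ?_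
    filter_upwards [eventually_all.mpr fun i => analyticOrderAt_eq_top.mp (hfin i)] with t ht
    simp [ht]

/-- Arc-analyticity of `x ↦ (∑ x_i^(2^N))^(1/2^k)` for `k < N`: composed with a
real analytic arc `γ : ℝ → ℝ^r`, the function
`t ↦ (∑_i γ_i(t)^(2^N))^(1/2^k)` is real analytic on `ℝ`. -/
theorem analyticOn_root_sum_pow_comp_arc (N k r : ℕ) (hk : 1 ≤ k) (hkN : k < N)
    (hr : 1 ≤ r) (γ : ℝ → Fin r → ℝ)
    (hγ : ∀ i, AnalyticOn ℝ (fun t => γ t i) Set.univ) :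
    AnalyticOn ℝ (fun t => (∑ i, γ t i ^ (2 ^ N)) ^ ((1 : ℝ) / 2 ^ k)) Set.univ :=
  analyticOn_root_sum_pow_comp_arc_general N k r hkN γ hγ
end

section
/- Let N ≥ 1, A, B, s ≥ 0 be integers with (A, B) ≠ (0, 0), let ε₁, …, ε_s ∈ {−1, 1} and let k₁, …, k_s be integers with 1 ≤ k_i < N. Define P(x, y) = ∑_{i=1}^A x_i^(2^N) − ∑_{j=1}^B y_j^(2^N) for (x, y) ∈ ℝ^A × ℝ^B and R(z) = ∑_{i=1}^s ε_i z_i^(2^{k_i}) for z ∈ ℝ^s. Then the map (w, x, y, z) ↦ (w, (w·x_i)_i, (w·y_j)_j, (w^(2^{N−k_i})·z_i)_i) is a bijection from (ℝ ∖ {0}) × {(x, y, z) ∈ ℝ^A × ℝ^B × ℝ^s : 1 + P(x, y) + R(z) = 0} onto {(w, x, y, z) ∈ ℝ × ℝ^A × ℝ^B × ℝ^s : w ≠ 0 and w^(2^N) + P(x, y) + R(z) = 0}. -/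
/-- Weighted-homogeneous change of variables: with
`P(x, y) = ∑ x_i^(2^N) − ∑ y_j^(2^N)` and `R(z) = ∑ ε_i z_i^(2^{k_i})`,
the map `(w, x, y, z) ↦ (w, (w·x_i)_i, (w·y_j)_j, (w^(2^{N−k_i})·z_i)_i)` is a
bijection from `(ℝ ∖ {0}) × {1 + P + R = 0}` onto
`{(w, x, y, z) : w ≠ 0 ∧ w^(2^N) + P(x,y) + R(z) = 0}`. -/
theorem bijOn_weighted_homogeneous_change (N A B s : ℕ) (hN : 1 ≤ N)
    (hAB : ¬(A = 0 ∧ B = 0))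
    (εv : Fin s → ℝ) (hεv : ∀ i, εv i = 1 ∨ εv i = -1)
    (k : Fin s → ℕ) (hk : ∀ i, 1 ≤ k i ∧ k i < N) :
    Set.BijOn
      (fun p : ℝ × (Fin A → ℝ) × (Fin B → ℝ) × (Fin s → ℝ) =>
        (p.1, fun i => p.1 * p.2.1 i, fun j => p.1 * p.2.2.1 j,
          fun i => p.1 ^ (2 ^ (N - k i)) * p.2.2.2 i))
      {p : ℝ × (Fin A → ℝ) × (Fin B → ℝ) × (Fin s → ℝ) |
        p.1 ≠ 0 ∧
          1 + (∑ i, p.2.1 i ^ (2 ^ N) - ∑ j, p.2.2.1 j ^ (2 ^ N)) +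
              ∑ i, εv i * p.2.2.2 i ^ (2 ^ (k i)) = 0}
      {p : ℝ × (Fin A → ℝ) × (Fin B → ℝ) × (Fin s → ℝ) |
        p.1 ≠ 0 ∧
          p.1 ^ (2 ^ N) + (∑ i, p.2.1 i ^ (2 ^ N) - ∑ j, p.2.2.1 j ^ (2 ^ N)) +
              ∑ i, εv i * p.2.2.2 i ^ (2 ^ (k i)) = 0} := by
  have hexp : ∀ i : Fin s, 2 ^ (N - k i) * 2 ^ (k i) = 2 ^ N := by
    intro i
    rw [← pow_add]
    congr 1
    have := (hk i).2
    omega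
  -- key homogeneity identity
  have key : ∀ (w : ℝ) (x : Fin A → ℝ) (y : Fin B → ℝ) (z : Fin s → ℝ),
      ((∑ i, (w * x i) ^ (2 ^ N) - ∑ j, (w * y j) ^ (2 ^ N)) +
        ∑ i, εv i * (w ^ (2 ^ (N - k i)) * z i) ^ (2 ^ (k i)))
      = w ^ (2 ^ N) *
        ((∑ i, x i ^ (2 ^ N) - ∑ j, y j ^ (2 ^ N)) + ∑ i, εv i * z i ^ (2 ^ (k i))) := by
    intro w x y z
    have h1 : ∀ i : Fin A, (w * x i) ^ (2 ^ N) = w ^ (2 ^ N) * x i ^ (2 ^ N) :=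
      fun i => mul_pow _ _ _
    have h2 : ∀ j : Fin B, (w * y j) ^ (2 ^ N) = w ^ (2 ^ N) * y j ^ (2 ^ N) :=
      fun j => mul_pow _ _ _
    have h3 : ∀ i : Fin s, εv i * (w ^ (2 ^ (N - k i)) * z i) ^ (2 ^ (k i)) =
        w ^ (2 ^ N) * (εv i * z i ^ (2 ^ (k i))) := by
      intro i
      rw [mul_pow, ← pow_mul, hexp i]
      ring
    simp only [h1, h2, h3]
    rw [← Finset.mul_sum, ← Finset.mul_sum, ← Finset.mul_sum]
    ring
  constructor
  · -- MapsTo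
    rintro ⟨w, x, y, z⟩ ⟨hw, heq⟩
    refine ⟨hw, ?_⟩
    simp only at heq ⊢
    linear_combination key w x y z + w ^ (2 ^ N) * heq
  constructor
  · -- InjOn
    rintro ⟨w, x, y, z⟩ ⟨hw, -⟩ ⟨w', x', y', z'⟩ ⟨hw', -⟩ h
    simp only [Prod.mk.injEq] at h
    obtain ⟨h0, h1, h2, h3⟩ := h
    subst h0
    refine Prod.ext rfl (Prod.ext ?_ (Prod.ext ?_ ?_)) <;> simp only
    · funext i
      exact mul_left_cancel₀ hw (congrFun h1 i)
    · funext j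
      exact mul_left_cancel₀ hw (congrFun h2 j)
    · funext i
      exact mul_left_cancel₀ (pow_ne_zero _ hw) (congrFun h3 i)
  · -- SurjOn
    rintro ⟨w, x, y, z⟩ ⟨hw, heq⟩
    have hwp : ∀ i : Fin s, (w : ℝ) ^ (2 ^ (N - k i)) ≠ 0 := fun i => pow_ne_zero _ hw
    refine ⟨(w, fun i => x i / w, fun j => y j / w, fun i => z i / w ^ (2 ^ (N - k i))),
      ⟨hw, ?_⟩, ?_⟩
    · -- source membership
      have hk2 := key w (fun i => x i / w) (fun j => y j / w)
        (fun i => z i / w ^ (2 ^ (N - k i)))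
      simp only [mul_div_cancel₀ _ hw, mul_div_cancel₀ _ (hwp _)] at hk2
      have hwN : (w : ℝ) ^ (2 ^ N) ≠ 0 := pow_ne_zero _ hw
      simp only at heq
      have : w ^ (2 ^ N) * (1 + ((∑ i, (x i / w) ^ (2 ^ N) - ∑ j, (y j / w) ^ (2 ^ N)) +
          ∑ i, εv i * (z i / w ^ (2 ^ (N - k i))) ^ (2 ^ (k i)))) = 0 := by
        rw [mul_add, mul_one, ← hk2]
        linarith [heq]
      have := (mul_eq_zero.mp this).resolve_left hwN
      linarith [this]
    · -- maps to p
      simp only [Prod.mk.injEq]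
      refine ⟨trivial, ?_, ?_, ?_⟩
      · funext i; exact mul_div_cancel₀ _ hw
      · funext j; exact mul_div_cancel₀ _ hw
      · funext i; exact mul_div_cancel₀ _ (hwp i)
end

section
/- Let p ≥ 3 be an odd integer, let k ≥ 1, let m₁, …, m_k be positive integers, let ε₁, …, ε_k ∈ {−1, 1}, and let s ∈ [0, 1]. Define l_s : ℝ^{1+k} → ℝ by l_s(x, y₁, …, y_k) = x^p + ∑_{i=1}^k (p·s·x·y_i^{m_i(p−1)} + ε_i·y_i^{m_i p}). Then the gradient of l_s vanishes at a point (x, y₁, …, y_k) if and only if (x, y₁, …, y_k) = 0; in particular l_s has an isolated critical point at the origin for every s ∈ [0, 1]. -/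
/-! The derivative of `l_s` at `(x, y)` is `lPolyDx • dx + ∑ i, lPolyDy i • dy_i`, where `dx`,
`dy_i` are the coordinate functionals. Since `p - 1` is even and `s ≥ 0`,
`lPolyDx = p x^(p-1) + ∑ p s y_i^(m_i (p-1))` is a sum of nonnegative terms, so it vanishes only
if `x = 0`; at `x = 0` the `y_i`-partial is `ε_i m_i p y_i^(m_i p - 1)`, which forces `y_i = 0`.
Conversely every exponent is positive, so the derivative vanishes at the origin. -/

open ContinuousLinearMap

section Coordinates

variable {𝕜 ι : Type*} [NormedField 𝕜] [Fintype ι] [DecidableEq ι]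

theorem smul_fst_add_sum_smul_coord_eq_zero_iff (a : 𝕜) (b : ι → 𝕜) :
    a • fst 𝕜 𝕜 (ι → 𝕜) + ∑ i, b i • (proj i).comp (snd 𝕜 𝕜 (ι → 𝕜)) = 0 ↔ a = 0 ∧ b = 0 := by
  refine ⟨fun h => ⟨?_, funext fun j => ?_⟩, ?_⟩
  · simpa using congr($h (1, 0))
  · simpa [Pi.single_apply] using congr($h (0, Pi.single j 1))
  · rintro ⟨rfl, rfl⟩
    ext <;> simp

end Coordinates

section

variable {k : ℕ} (p : ℕ) (m : Fin k → ℕ) (ε : Fin k → ℝ) (s : ℝ)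

noncomputable def lPoly (q : ℝ × (Fin k → ℝ)) : ℝ :=
  q.1 ^ p + ∑ i, ((p : ℝ) * s * q.1 * q.2 i ^ (m i * (p - 1)) + ε i * q.2 i ^ (m i * p))

noncomputable def lPolyDx (q : ℝ × (Fin k → ℝ)) : ℝ :=
  p * q.1 ^ (p - 1) + ∑ i, p * s * q.2 i ^ (m i * (p - 1))

noncomputable def lPolyDy (q : ℝ × (Fin k → ℝ)) (i : Fin k) : ℝ :=
  p * s * q.1 * ((m i * (p - 1) : ℕ) * q.2 i ^ (m i * (p - 1) - 1)) +
    ε i * ((m i * p : ℕ) * q.2 i ^ (m i * p - 1))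

theorem hasFDerivAt_lPoly (v : ℝ × (Fin k → ℝ)) :
    HasFDerivAt (lPoly p m ε s)
      (lPolyDx p m s v • fst ℝ ℝ (Fin k → ℝ) +
        ∑ i, lPolyDy p m ε s v i • (proj i).comp (snd ℝ ℝ (Fin k → ℝ))) v := by
  have hx : HasFDerivAt (fun q : ℝ × (Fin k → ℝ) => q.1) (fst ℝ ℝ (Fin k → ℝ)) v := hasFDerivAt_fst
  have hy (i : Fin k) : HasFDerivAt (fun q : ℝ × (Fin k → ℝ) => q.2 i)
      ((proj i).comp (snd ℝ ℝ (Fin k → ℝ))) v :=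
    ((proj i).comp (snd ℝ ℝ (Fin k → ℝ))).hasFDerivAt
  have H : HasFDerivAt (lPoly p m ε s) _ v :=
    (hx.pow p).add (HasFDerivAt.fun_sum (u := Finset.univ) fun i _ =>
      ((hx.const_mul ((p : ℝ) * s)).mul ((hy i).pow (m i * (p - 1)))).add
        (((hy i).pow (m i * p)).const_mul (ε i)))
  refine H.congr_fderiv ?_
  ext w <;> simp [lPolyDx, lPolyDy] <;> exact Finset.sum_congr rfl fun i _ => by ring

theorem fst_eq_zero_of_lPolyDx_eq_zero (hp : Odd p) (hp1 : 1 < p) (hs : 0 ≤ s)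
    {v : ℝ × (Fin k → ℝ)} (h : lPolyDx p m s v = 0) : v.1 = 0 := by
  have hev : Even (p - 1) := Nat.Odd.sub_odd hp odd_one
  have hx : 0 ≤ (p : ℝ) * v.1 ^ (p - 1) := by positivity [hev.pow_nonneg v.1]
  have hy : 0 ≤ ∑ i, (p : ℝ) * s * v.2 i ^ (m i * (p - 1)) :=
    Finset.sum_nonneg fun i _ => by positivity [(hev.mul_left (m i)).pow_nonneg (v.2 i)]
  have hx0 := ((add_eq_zero_iff_of_nonneg hx hy).mp h).1
  exact eq_zero_of_pow_eq_zero ((mul_eq_zero.mp hx0).resolve_left (by positivity))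

theorem snd_eq_zero_of_lPolyDy_eq_zero (hp : 0 < p) {i : Fin k} (hm : 0 < m i) (hε : ε i ≠ 0)
    {v : ℝ × (Fin k → ℝ)} (h : lPolyDy p m ε s v i = 0) (hx : v.1 = 0) : v.2 i = 0 := by
  simp only [lPolyDy, hx, mul_zero, zero_mul, zero_add, mul_eq_zero, hε, Nat.cast_eq_zero,
    false_or] at h
  exact eq_zero_of_pow_eq_zero (h.resolve_left (by omega))

theorem lPolyDx_zero (hp : 1 < p) (hm : ∀ i, 0 < m i) : lPolyDx p m s 0 = 0 := by
  have hp1 : p - 1 ≠ 0 := Nat.sub_ne_zero_of_lt hp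
  have (i : Fin k) : m i * (p - 1) ≠ 0 := Nat.mul_ne_zero (hm i).ne' hp1
  simp [lPolyDx, this, hp1]

theorem lPolyDy_zero (hp : 1 < p) {i : Fin k} (hm : 0 < m i) : lPolyDy p m ε s 0 i = 0 := by
  have : m i * p - 1 ≠ 0 := by have := Nat.mul_le_mul hm hp; omega
  simp [lPolyDy, this]

end

theorem isolated_critical_point_l_general (p k : ℕ) (hp : Odd p) (hp3 : 3 ≤ p)
    (m : Fin k → ℕ) (hm : ∀ i, 0 < m i)
    (εv : Fin k → ℝ) (hεv : ∀ i, εv i = 1 ∨ εv i = -1)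
    (s : ℝ) (hs : s ∈ Set.Icc (0 : ℝ) 1) :
    ∀ v : ℝ × (Fin k → ℝ),
      fderiv ℝ (fun q : ℝ × (Fin k → ℝ) =>
          q.1 ^ p + ∑ i, ((p : ℝ) * s * q.1 * q.2 i ^ (m i * (p - 1)) +
            εv i * q.2 i ^ (m i * p))) v = 0 ↔
        v = 0 := by
  intro v
  have hp1 : 1 < p := by omega
  have hε (i : Fin k) : εv i ≠ 0 := by rcases hεv i with h | h <;> norm_num [h]
  change fderiv ℝ (lPoly p m εv s) v = 0 ↔ v = 0
  rw [(hasFDerivAt_lPoly p m εv s v).fderiv, smul_fst_add_sum_smul_coord_eq_zero_iff]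
  constructor
  · rintro ⟨hx, hy⟩
    have hv1 := fst_eq_zero_of_lPolyDx_eq_zero p m s hp hp1 hs.1 hx
    exact Prod.ext hv1 <| funext fun i =>
      snd_eq_zero_of_lPolyDy_eq_zero p m εv s (by omega) (hm i) (hε i) (congrFun hy i) hv1
  · rintro rfl
    exact ⟨lPolyDx_zero p m s hp1 hm, funext fun i => lPolyDy_zero p m εv s hp1 (hm i)⟩

/-- For `p ≥ 3` odd, `ε_i ∈ {±1}` and `s ∈ [0, 1]`, the polynomial
`l_s(x, y) = x^p + ∑ (p·s·x·y_i^{m_i(p−1)} + ε_i·y_i^{m_i p})` has gradient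
vanishing exactly at the origin. -/
theorem isolated_critical_point_l (p k : ℕ) (hp : Odd p) (hp3 : 3 ≤ p) (hk : 1 ≤ k)
    (m : Fin k → ℕ) (hm : ∀ i, 0 < m i)
    (εv : Fin k → ℝ) (hεv : ∀ i, εv i = 1 ∨ εv i = -1)
    (s : ℝ) (hs : s ∈ Set.Icc (0 : ℝ) 1) :
    ∀ v : ℝ × (Fin k → ℝ),
      fderiv ℝ (fun q : ℝ × (Fin k → ℝ) =>
          q.1 ^ p + ∑ i, ((p : ℝ) * s * q.1 * q.2 i ^ (m i * (p - 1)) +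
            εv i * q.2 i ^ (m i * p))) v = 0 ↔
        v = 0 :=
  isolated_critical_point_l_general p k hp hp3 m hm εv hεv s hs
end

section
/- Let N ≥ 1, r ≥ 1, s ≥ 0 be integers, let ε, ε₁, …, ε_s ∈ {−1, 1}, and let k₁, …, k_s be integers with 1 ≤ k_j < N. Define f : ℝ^r × ℝ^s → ℝ by f(x, y) = ε·∑_{i=1}^r x_i^(2^N) + ∑_{j=1}^s ε_j y_j^(2^{k_j}). Then there is a bijection between the set {(x, y) ∈ ℝ^r × ℝ^s : f(x, y) = 0} and the disjoint union of (ℝ^r ∖ {0}) × {z ∈ ℝ^s : ε + ∑_{j=1}^s ε_j z_j^(2^{k_j}) = 0} and {y ∈ ℝ^s : ∑_{j=1}^s ε_j y_j^(2^{k_j}) = 0}. -/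
/-!
For `x ≠ 0` put `S = ∑ xᵢ^(2^N) > 0`. The substitution `y_j = S^(1/2^{k_j}) z_j` multiplies
`∑ ε_j y_j^(2^{k_j})` by `S`, so it identifies the fiber `{y : ε S + ∑ ε_j y_j^(2^{k_j}) = 0}` over
`x` with `{z : ε + ∑ ε_j z_j^(2^{k_j}) = 0}`; over `x = 0` the fiber is `{y : ∑ ε_j y_j^(2^{k_j}) = 0}`.
-/

open Finset

namespace Equiv

def sigmaEquivSigmaNeSum {α : Type*} [DecidableEq α] (a : α) (β : α → Type*) :
    (Σ x, β x) ≃ (Σ x : {x // x ≠ a}, β x) ⊕ β a where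
  toFun p := if h : p.1 = a then .inr (h ▸ p.2) else .inl ⟨⟨p.1, h⟩, p.2⟩
  invFun := Sum.elim (fun p => ⟨p.1, p.2⟩) (fun b => ⟨a, b⟩)
  left_inv := by
    rintro ⟨x, b⟩
    by_cases h : x = a
    · subst h; simp
    · simp [h]
  right_inv := by
    rintro (⟨⟨x, hx⟩, b⟩ | b)
    · simp [hx]
    · simp

end Equiv

section WeightedScale

variable {ι : Type*} (d : ι → ℕ)

noncomputable def weightedScale (c : ℝ) (y : ι → ℝ) : ι → ℝ :=
  fun j => c ^ (d j : ℝ)⁻¹ * y j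

theorem weightedScale_weightedScale {c c' : ℝ} (hc : 0 ≤ c) (hc' : 0 ≤ c') (y : ι → ℝ) :
    weightedScale d c (weightedScale d c' y) = weightedScale d (c * c') y := by
  ext j
  simp only [weightedScale, Real.mul_rpow hc hc', mul_assoc]

theorem weightedScale_one (y : ι → ℝ) : weightedScale d 1 y = y := by
  ext j
  simp [weightedScale]

theorem weightedScale_apply_pow {c : ℝ} (hc : 0 ≤ c) (y : ι → ℝ) {j : ι} (hj : d j ≠ 0) :
    weightedScale d c y j ^ d j = c * y j ^ d j := by
  rw [weightedScale, mul_pow, ← Real.rpow_natCast (c ^ _), ← Real.rpow_mul hc,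
    inv_mul_cancel₀ (Nat.cast_ne_zero.2 hj), Real.rpow_one]

noncomputable def weightedScaleEquiv {c : ℝ} (hc : 0 < c) : (ι → ℝ) ≃ (ι → ℝ) where
  toFun := weightedScale d c
  invFun := weightedScale d c⁻¹
  left_inv y := by
    rw [weightedScale_weightedScale d (inv_nonneg.2 hc.le) hc.le, inv_mul_cancel₀ hc.ne',
      weightedScale_one]
  right_inv y := by
    rw [weightedScale_weightedScale d hc.le (inv_nonneg.2 hc.le), mul_inv_cancel₀ hc.ne',
      weightedScale_one]

variable [Fintype ι]

theorem sum_mul_weightedScale_pow (hd : ∀ j, d j ≠ 0) {c : ℝ} (hc : 0 ≤ c) (a y : ι → ℝ) :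
    ∑ j, a j * weightedScale d c y j ^ d j = c * ∑ j, a j * y j ^ d j := by
  rw [mul_sum]
  refine sum_congr rfl fun j _ => ?_
  rw [weightedScale_apply_pow d hc y (hd j)]
  ring

noncomputable def levelSetEquivOfWeightedScale (hd : ∀ j, d j ≠ 0) {c : ℝ} (hc : 0 < c)
    (b : ℝ) (a : ι → ℝ) :
    {y : ι → ℝ // b * c + ∑ j, a j * y j ^ d j = 0} ≃ {z : ι → ℝ // b + ∑ j, a j * z j ^ d j = 0} :=
  (weightedScaleEquiv d (inv_pos.2 hc)).subtypeEquiv fun y => by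
    change _ ↔ b + ∑ j, a j * weightedScale d c⁻¹ y j ^ d j = 0
    rw [sum_mul_weightedScale_pow d hd (inv_nonneg.2 hc.le),
      ← mul_right_inj' hc.ne' (b := b + _), mul_zero, mul_add, mul_inv_cancel_left₀ hc.ne',
      mul_comm c b]

end WeightedScale

theorem sum_pow_pos_of_ne_zero {ι : Type*} [Fintype ι] {n : ℕ} (hn : Even n) {x : ι → ℝ}
    (hx : x ≠ 0) : 0 < ∑ i, x i ^ n := by
  obtain ⟨i, hi⟩ := Function.ne_iff.1 hx
  exact sum_pos' (fun i _ => hn.pow_nonneg _) ⟨i, mem_univ i, hn.pow_pos hi⟩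

theorem equiv_zero_fiber_scaled_general (N r s : ℕ) (hN : 1 ≤ N)
    (ε : ℝ)
    (εv : Fin s → ℝ)
    (k : Fin s → ℕ) :
    Nonempty
      ({p : (Fin r → ℝ) × (Fin s → ℝ) |
          ε * ∑ i, p.1 i ^ (2 ^ N) + ∑ j, εv j * p.2 j ^ (2 ^ (k j)) = 0} ≃
        ({x : Fin r → ℝ // x ≠ 0} ×
            {z : Fin s → ℝ | ε + ∑ j, εv j * z j ^ (2 ^ (k j)) = 0}) ⊕
          {y : Fin s → ℝ | ∑ j, εv j * y j ^ (2 ^ (k j)) = 0}) := by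
  classical
  have hEven : Even (2 ^ N) := (Nat.even_pow' (by omega)).2 even_two
  have hd : ∀ j, 2 ^ k j ≠ 0 := fun j => pow_ne_zero _ two_ne_zero
  exact ⟨(Equiv.subtypeProdEquivSigmaSubtype fun (x : Fin r → ℝ) (y : Fin s → ℝ) =>
      ε * ∑ i, x i ^ (2 ^ N) + ∑ j, εv j * y j ^ (2 ^ (k j)) = 0).trans <|
    (Equiv.sigmaEquivSigmaNeSum 0 _).trans <|
    Equiv.sumCongr
      ((Equiv.sigmaCongrRight fun x => levelSetEquivOfWeightedScale (fun j => 2 ^ k j) hd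
        (sum_pow_pos_of_ne_zero hEven x.2) ε εv).trans (Equiv.sigmaEquivProd _ _))
      (Equiv.subtypeEquivRight fun y => by simp [zero_pow (pow_ne_zero N two_ne_zero)])⟩

/-- The zero fiber of `f(x, y) = ε·∑ x_i^(2^N) + ∑ ε_j y_j^(2^{k_j})` is in
bijection with the disjoint union of
`(ℝ^r ∖ {0}) × {z : ε + ∑ ε_j z_j^(2^{k_j}) = 0}` and
`{y : ∑ ε_j y_j^(2^{k_j}) = 0}`. -/
theorem equiv_zero_fiber_scaled (N r s : ℕ) (hN : 1 ≤ N) (hr : 1 ≤ r)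
    (ε : ℝ) (hε : ε = 1 ∨ ε = -1)
    (εv : Fin s → ℝ) (hεv : ∀ j, εv j = 1 ∨ εv j = -1)
    (k : Fin s → ℕ) (hk : ∀ j, 1 ≤ k j ∧ k j < N) :
    Nonempty
      ({p : (Fin r → ℝ) × (Fin s → ℝ) |
          ε * ∑ i, p.1 i ^ (2 ^ N) + ∑ j, εv j * p.2 j ^ (2 ^ (k j)) = 0} ≃
        ({x : Fin r → ℝ // x ≠ 0} ×
            {z : Fin s → ℝ | ε + ∑ j, εv j * z j ^ (2 ^ (k j)) = 0}) ⊕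
          {y : Fin s → ℝ | ∑ j, εv j * y j ^ (2 ^ (k j)) = 0}) :=
  equiv_zero_fiber_scaled_general N r s hN ε εv k
end
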